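/- Let G be a Lie group, Γ ⊆ Isom(X) a group of deck transformations acting properly discontinuously and cocompactly on a manifold X, and G⁰ a subgroup such that Γ₀ = Γ ∩ G⁰ is a cocompact lattice in G⁰ with compact fundamental domain F containing the identity. Then the closed subgroup G′ generated by G⁰ and Γ acts properly on X. -/

import Mathlib

/-!
Choose a compact `K` with `A ⊆ interior K`. By normality and the fundamental domain, every
element of `G⁰ ⊔ Γ` is `γ * f` with `γ ∈ Γ`, `f ∈ F`; if `(γ * f) • a ∈ K` for some `a ∈ A`,
then `γ` moves the compact set `K ∪ F • A` back onto itself, which leaves finitely many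
choices of `γ`. So the elements of `G⁰ ⊔ Γ` sending a point of `A` into `interior K` lie in
a compact set `T * F` with `T ⊆ Γ` finite; since `interior K` is open this passes to the closure of
`G⁰ ⊔ Γ`. The return set is moreover closed, hence compact.
-/

open Pointwise

section ReturnSet

variable {G X : Type*} [Group G] [TopologicalSpace G] [TopologicalSpace X] [MulAction G X]
  [ContinuousSMul G X]

theorem isClosed_setOf_smul_inter_nonempty {A B : Set X} (hA : IsCompact A) (hB : IsClosed B) :
    IsClosed {g : G | (g • A ∩ B).Nonempty} := by
  have : CompactSpace A := isCompact_iff_compactSpace.mp hA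
  have hgraph : IsClosed {p : G × A | p.1 • (p.2 : X) ∈ B} :=
    hB.preimage (by fun_prop)
  convert isClosedMap_fst_of_compactSpace _ hgraph using 1
  ext g
  constructor
  · rintro ⟨_, ⟨a, ha, rfl⟩, hgaB⟩
    exact ⟨(g, ⟨a, ha⟩), hgaB, rfl⟩
  · rintro ⟨⟨g, a⟩, hgaB, rfl⟩
    exact ⟨g • (a : X), Set.smul_mem_smul_set a.2, hgaB⟩

theorem setOf_mem_closure_smul_inter_nonempty_subset {H Γ F : Set G} {A K : Set X}
    (hH : H ⊆ Γ * F) (hAK : A ⊆ interior K) :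
    {g | g ∈ closure H ∧ (g • A ∩ A).Nonempty} ⊆
      closure ({γ | γ ∈ Γ ∧ (γ • (K ∪ F • A) ∩ (K ∪ F • A)).Nonempty} * F) := by
  rintro g ⟨hg, _, ⟨a, ha, rfl⟩, hga⟩
  set U : Set G := (· • a) ⁻¹' interior K
  have hU : IsOpen U := isOpen_interior.preimage (by fun_prop)
  refine closure_mono ?_ (hU.inter_closure ⟨hAK hga, hg⟩)
  rintro _ ⟨hγfa, hγf⟩
  obtain ⟨γ, hγ, f, hf, rfl⟩ := hH hγf
  have hfa : f • a ∈ F • A := Set.smul_mem_smul hf ha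
  refine Set.mul_mem_mul ⟨hγ, γ • f • a, Set.smul_mem_smul_set (Or.inr hfa), Or.inl ?_⟩ hf
  rw [← mul_smul]
  exact interior_subset hγfa

end ReturnSet

theorem Subgroup.coe_sup_subset_mul_of_subset_mul {G : Type*} [Group G] {N Γ : Subgroup G}
    [N.Normal] {F : Set G} (hF : (N : Set G) ⊆ Γ * F) : ((N ⊔ Γ : Subgroup G) : Set G) ⊆ Γ * F :=
  calc ((N ⊔ Γ : Subgroup G) : Set G) = Γ * N := by rw [sup_comm, Subgroup.mul_normal]
    _ ⊆ Γ * (Γ * F) := Set.mul_subset_mul_left hF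
    _ = Γ * F := by rw [← mul_assoc, ← Subgroup.coe_toSubmonoid, Submonoid.coe_mul_self_eq]

theorem stmt_10_general {G X : Type*} [Group G] [TopologicalSpace G] [IsTopologicalGroup G]
    [T2Space G] [TopologicalSpace X] [T2Space X] [LocallyCompactSpace X]
    [MulAction G X] (hcont : Continuous fun p : G × X => p.1 • p.2)
    (Γ G0 : Subgroup G) [G0.Normal]
    (hpd : ∀ A : Set X, IsCompact A →
      {γ : G | γ ∈ Γ ∧ ((γ • A) ∩ A).Nonempty}.Finite)
    (F : Set G) (hFcompact : IsCompact F)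
    (hFdom : ∀ g ∈ G0, ∃ γ ∈ Γ ⊓ G0, g ∈ γ • F) :
    ∀ A : Set X, IsCompact A →
      IsCompact {g : G | g ∈ (G0 ⊔ Γ).topologicalClosure ∧ ((g • A) ∩ A).Nonempty} := by
  have : ContinuousSMul G X := ⟨hcont⟩
  intro A hA
  obtain ⟨K, hK, hAK⟩ := exists_compact_superset hA
  have hG0 : (G0 : Set G) ⊆ Γ * F := fun g hg ↦ by
    obtain ⟨γ, hγ, f, hf, rfl⟩ := hFdom g hg
    exact Set.mul_mem_mul hγ.1 hf
  have hTF : IsCompact (_ * F) :=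
    (hpd _ (hK.union (hFcompact.smul_set hA))).isCompact.mul hFcompact
  refine hTF.of_isClosed_subset
    (isClosed_closure.inter (isClosed_setOf_smul_inter_nonempty hA hA.isClosed)) ?_
  rw [← hTF.isClosed.closure_eq]
  have hsup := Subgroup.coe_sup_subset_mul_of_subset_mul hG0
  exact setOf_mem_closure_smul_inter_nonempty_subset hsup hAK

/-- Let `Γ ⊆ G = Isom(X)` be a group of deck transformations acting properly
discontinuously and cocompactly on `X`, and let `G⁰` be a (normal) subgroup such that
`Γ₀ = Γ ∩ G⁰` is cocompact in `G⁰`, with compact fundamental domain `F ⊆ G⁰` containing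
the identity (so `G⁰ = Γ₀ • F`).  Then the closed subgroup `G′` generated by `G⁰` and `Γ`
acts properly on `X`: for every compact `A ⊆ X`, the set `{g ∈ G′ : gA ∩ A ≠ ∅}` is
compact. -/
theorem stmt_10 {G X : Type*} [Group G] [TopologicalSpace G] [IsTopologicalGroup G]
    [T2Space G] [TopologicalSpace X] [T2Space X] [LocallyCompactSpace X]
    [MulAction G X] (hcont : Continuous fun p : G × X => p.1 • p.2)
    (Γ G0 : Subgroup G) [G0.Normal] (hΓclosed : IsClosed (Γ : Set G))
    (hpd : ∀ A : Set X, IsCompact A →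
      {γ : G | γ ∈ Γ ∧ ((γ • A) ∩ A).Nonempty}.Finite)
    (hcc : ∃ D : Set X, IsCompact D ∧ ⋃ γ ∈ Γ, γ • D = Set.univ)
    (F : Set G) (hFcompact : IsCompact F) (hFsub : F ⊆ G0) (hFone : (1 : G) ∈ F)
    (hFdom : ∀ g ∈ G0, ∃ γ ∈ Γ ⊓ G0, g ∈ γ • F) :
    ∀ A : Set X, IsCompact A →
      IsCompact {g : G | g ∈ (G0 ⊔ Γ).topologicalClosure ∧ ((g • A) ∩ A).Nonempty} :=
  stmt_10_general hcont Γ G0 hpd F hFcompact hFdom
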